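/- Real Verblunsky coefficient Jacobian: if all α_k ∈ (-1,1) are real and Φ_n has real coefficients κ_j^{(n)}, then the Jacobian determinant of the ℝ^n → ℝ^n map (α_0,...,α_{n-1}) ↦ (κ_1^{(n)},...,κ_n^{(n)}) equals (-1)^n · ∏_{k even} (1 - α_k²)^{k/2} · ∏_{k odd} (1 - α_k)(1 - α_k²)^{(k-1)/2}, where products run over 0 ≤ k ≤ n-1. -/

import Mathlib

open Polynomial Matrix

set_option linter.unreachableTactic false
set_option linter.unusedTactic false
set_option linter.unnecessarySeqFocus false

/-- The monic Szegő polynomials with real Verblunsky coefficients: `Φ_0 = 1`,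
`Φ_{j+1}(z) = z Φ_j(z) - α_j Φ_j^*(z)`, where `Φ_j^*` is the degree-`j` reversed
polynomial. -/
noncomputable def szegoReal (a : ℕ → ℝ) : ℕ → Polynomial ℝ
  | 0 => 1
  | k + 1 =>
      Polynomial.X * szegoReal a k -
        Polynomial.C (a k) * Polynomial.reflect k (szegoReal a k)

/-- The map from real Verblunsky coefficients `(α_0,…,α_{n-1})` to the non-leading
coefficients `(κ_1^{(n)},…,κ_n^{(n)})` of the degree-`n` monic Szegő polynomial. -/
noncomputable def verblunskyToCoeffsReal (n : ℕ) (a : Fin n → ℝ) : Fin n → ℝ :=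
  fun j => (szegoReal (fun k => if h : k < n then a ⟨k, h⟩ else 0) n).coeff (n - 1 - (j : ℕ))


/-- The matrix `I - c J` where `J` is the index-reversal permutation matrix on `Fin m`. -/
noncomputable def Rmat (m : ℕ) (c : ℝ) : Matrix (Fin m) (Fin m) ℝ :=
  fun i j => (if j = i then 1 else 0) - c * (if (j : ℕ) = m - 1 - (i : ℕ) then 1 else 0)

/-- Equiv splitting off the first and last index of `Fin (m+2)`. -/
def pairEquiv (m : ℕ) : Fin 2 ⊕ Fin m ≃ Fin (m + 2) where
  toFun := Sum.elim (fun i => if i = 0 then 0 else Fin.last (m + 1))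
    (fun i => ⟨(i : ℕ) + 1, by omega⟩)
  invFun := fun j =>
    if h0 : (j : ℕ) = 0 then Sum.inl 0
    else if h1 : (j : ℕ) = m + 1 then Sum.inl 1
    else Sum.inr ⟨(j : ℕ) - 1, by have := j.isLt; omega⟩
  left_inv := by
    rintro (i | i)
    · fin_cases i <;> simp [Fin.last]
    · have := i.isLt
      simp only [Sum.elim_inr]
      split_ifs <;> first | (exfalso; omega) | (simp; omega)
  right_inv := by
    intro j
    have := j.isLt
    dsimp only
    by_cases h0 : (j : ℕ) = 0
    · rw [dif_pos h0]; simp [Fin.ext_iff, h0.symm]; omega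
    · by_cases h1 : (j : ℕ) = m + 1
      · rw [dif_neg h0, dif_pos h1]
        show (if (1 : Fin 2) = 0 then 0 else Fin.last (m + 1)) = j
        rw [if_neg (by decide), Fin.ext_iff, Fin.val_last, h1]
      · rw [dif_neg h0, dif_neg h1]
        rw [Fin.ext_iff]; show (j : ℕ) - 1 + 1 = j; omega

lemma pairEquiv_inl_zero (m : ℕ) : ((pairEquiv m) (Sum.inl 0) : ℕ) = 0 := rfl
lemma pairEquiv_inl_one (m : ℕ) : ((pairEquiv m) (Sum.inl 1) : ℕ) = m + 1 := rfl
lemma pairEquiv_inr (m : ℕ) (i : Fin m) : ((pairEquiv m) (Sum.inr i) : ℕ) = (i : ℕ) + 1 := rfl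

lemma Rmat_two_step (m : ℕ) (c : ℝ) :
    (Rmat (m + 2) c).det = (1 - c ^ 2) * (Rmat m c).det := by
  have h : (Rmat (m + 2) c).submatrix (pairEquiv m) (pairEquiv m) =
      Matrix.fromBlocks (Matrix.of ![![1, -c], ![-c, 1]]) 0 0 (Rmat m c) := by
    ext i j
    rcases i with i | i <;> rcases j with j | j
    · fin_cases i <;> fin_cases j <;>
      · simp only [Matrix.submatrix_apply, Rmat, Fin.ext_iff, pairEquiv, Sum.elim_inl,
          Equiv.coe_fn_mk]
        norm_num [Fin.ext_iff, Fin.last]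
    · have := j.isLt
      fin_cases i <;>
      · simp only [Matrix.submatrix_apply, Rmat, pairEquiv, Sum.elim_inl, Sum.elim_inr,
          Equiv.coe_fn_mk, Matrix.fromBlocks_apply₁₂, Matrix.zero_apply]
        norm_num [Fin.ext_iff, Fin.last] <;> (try omega) <;> (try (intro h; exfalso; omega)) <;> (split_ifs <;> first | (exfalso; omega) | norm_num)
    · have := i.isLt
      fin_cases j <;>
      · simp only [Matrix.submatrix_apply, Rmat, pairEquiv, Sum.elim_inl, Sum.elim_inr,
          Equiv.coe_fn_mk, Matrix.fromBlocks_apply₂₁, Matrix.zero_apply]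
        norm_num [Fin.ext_iff, Fin.last] <;> (try omega) <;> (try (intro h; exfalso; omega)) <;> (split_ifs <;> first | (exfalso; omega) | norm_num)
    · have hi := i.isLt
      have hj := j.isLt
      simp only [Matrix.submatrix_apply, Rmat, pairEquiv, Sum.elim_inr, Equiv.coe_fn_mk,
        Matrix.fromBlocks_apply₂₂]
      split_ifs <;> simp_all [Fin.ext_iff] <;> (split_ifs <;> first | rfl | (exfalso; omega))
  have hd : (Matrix.of ![![1, -c], ![-c, 1]] : Matrix (Fin 2) (Fin 2) ℝ).det = 1 - c ^ 2 := by
    rw [Matrix.det_fin_two]; simp; ring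
  calc (Rmat (m + 2) c).det
      = ((Rmat (m + 2) c).submatrix (pairEquiv m) (pairEquiv m)).det :=
        (Matrix.det_submatrix_equiv_self _ _).symm
    _ = (1 - c ^ 2) * (Rmat m c).det := by
        rw [h, Matrix.det_fromBlocks_zero₂₁, hd]

lemma Rmat_det (m : ℕ) (c : ℝ) :
    (Rmat m c).det =
      if Even m then (1 - c ^ 2) ^ (m / 2) else (1 - c) * (1 - c ^ 2) ^ ((m - 1) / 2) := by
  induction m using Nat.strong_induction_on with
  | _ m ih =>
    match m with
    | 0 => simp [Matrix.det_fin_zero]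
    | 1 =>
      rw [Matrix.det_fin_one]
      simp [Rmat]
    | (m + 2) =>
      rw [Rmat_two_step, ih m (by omega)]
      have hiff : Even (m + 2) ↔ Even m := by rw [Nat.even_iff, Nat.even_iff]; omega
      by_cases he : Even m
      · rw [if_pos he, if_pos (hiff.mpr he), show (m + 2) / 2 = m / 2 + 1 by omega]
        ring
      · have hm : m % 2 = 1 := Nat.odd_iff.mp (Nat.not_even_iff_odd.mp he)
        rw [if_neg he, if_neg (hiff.not.mpr he),
          show (m + 2 - 1) / 2 = (m - 1) / 2 + 1 by omega]
        ring



/-- The one-step Szegő coefficient update map on `ℝ^n`. -/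
noncomputable def Tmap (n : ℕ) (m : Fin n) (x : Fin n → ℝ) : Fin n → ℝ := fun j =>
  if (j : ℕ) < (m : ℕ) then
    x j - x m * x ⟨(m : ℕ) - 1 - (j : ℕ), by have := m.isLt; omega⟩
  else if (j : ℕ) = (m : ℕ) then -(x m) else x j

/-- The derivative of `Tmap` at `x`. -/
noncomputable def Tderiv (n : ℕ) (m : Fin n) (x : Fin n → ℝ) :
    (Fin n → ℝ) →L[ℝ] (Fin n → ℝ) :=
  ContinuousLinearMap.pi fun j =>
    if (j : ℕ) < (m : ℕ) then
      ContinuousLinearMap.proj j -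
        (x m • ContinuousLinearMap.proj ⟨(m : ℕ) - 1 - (j : ℕ), by have := m.isLt; omega⟩ +
          x ⟨(m : ℕ) - 1 - (j : ℕ), by have := m.isLt; omega⟩ • ContinuousLinearMap.proj m)
    else if (j : ℕ) = (m : ℕ) then -ContinuousLinearMap.proj m
    else ContinuousLinearMap.proj j

lemma hasFDerivAt_Tmap (n : ℕ) (m : Fin n) (x : Fin n → ℝ) :
    HasFDerivAt (Tmap n m) (Tderiv n m x) x := by
  rw [hasFDerivAt_pi']
  intro j
  have hproj : ∀ i : Fin n, HasFDerivAt (fun y : Fin n → ℝ => y i)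
      (ContinuousLinearMap.proj (R := ℝ) (φ := fun _ : Fin n => ℝ) i) x := by
    intro i
    have := (ContinuousLinearMap.proj (R := ℝ) (φ := fun _ : Fin n => ℝ) i).hasFDerivAt (x := x)
    exact this
  have hcomp : (ContinuousLinearMap.proj j).comp (Tderiv n m x) =
      (if (j : ℕ) < (m : ℕ) then
        ContinuousLinearMap.proj j -
          (x m • ContinuousLinearMap.proj ⟨(m : ℕ) - 1 - (j : ℕ), by have := m.isLt; omega⟩ +
            x ⟨(m : ℕ) - 1 - (j : ℕ), by have := m.isLt; omega⟩ • ContinuousLinearMap.proj m)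
      else if (j : ℕ) = (m : ℕ) then -ContinuousLinearMap.proj m
      else ContinuousLinearMap.proj j) := by
    rw [Tderiv, ContinuousLinearMap.proj_pi]
  rw [hcomp]
  by_cases hj : (j : ℕ) < (m : ℕ)
  · have hfun : (fun y => Tmap n m y j) =
        fun y : Fin n → ℝ =>
          y j - y m * y ⟨(m : ℕ) - 1 - (j : ℕ), by have := m.isLt; omega⟩ := by
      funext y; simp only [Tmap, if_pos hj]
    rw [if_pos hj, hfun]
    exact (hproj j).sub ((hproj m).mul (hproj _))
  · rw [if_neg hj]
    by_cases hj' : (j : ℕ) = (m : ℕ)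
    · have hfun : (fun y => Tmap n m y j) = fun y : Fin n → ℝ => -(y m) := by
        funext y; simp only [Tmap, if_neg hj, if_pos hj']
      rw [if_pos hj', hfun]
      exact (hproj m).neg
    · have hfun : (fun y => Tmap n m y j) = fun y : Fin n → ℝ => y j := by
        funext y; simp only [Tmap, if_neg hj, if_neg hj']
      rw [if_neg hj', hfun]
      exact hproj j

/-- The Jacobian matrix of `Tmap` at `x`. -/
noncomputable def Tmat (n : ℕ) (m : Fin n) (x : Fin n → ℝ) : Matrix (Fin n) (Fin n) ℝ :=
  fun i j =>
    if (i : ℕ) < (m : ℕ) then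
      (if (j : ℕ) = (i : ℕ) then 1 else 0) -
        x m * (if (j : ℕ) = (m : ℕ) - 1 - (i : ℕ) then 1 else 0) -
        x ⟨(m : ℕ) - 1 - (i : ℕ), by have := m.isLt; omega⟩ *
          (if (j : ℕ) = (m : ℕ) then 1 else 0)
    else if (i : ℕ) = (m : ℕ) then -(if (j : ℕ) = (m : ℕ) then 1 else 0)
    else (if (j : ℕ) = (i : ℕ) then 1 else 0)

lemma toMatrix'_Tderiv (n : ℕ) (m : Fin n) (x : Fin n → ℝ) :
    LinearMap.toMatrix' ((Tderiv n m x) : (Fin n → ℝ) →ₗ[ℝ] (Fin n → ℝ)) = Tmat n m x := by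
  ext i j
  rw [LinearMap.toMatrix'_apply]
  simp only [ContinuousLinearMap.coe_coe, Tderiv, ContinuousLinearMap.pi_apply, Tmat]
  by_cases hi : (i : ℕ) < (m : ℕ)
  · rw [if_pos hi, if_pos hi]
    simp only [ContinuousLinearMap.sub_apply, ContinuousLinearMap.add_apply,
      ContinuousLinearMap.smul_apply, ContinuousLinearMap.proj_apply, smul_eq_mul]
    simp only [Pi.single_apply, Fin.ext_iff]
    split_ifs <;> first | (exfalso; omega) | ring
  · rw [if_neg hi, if_neg hi]
    by_cases hi' : (i : ℕ) = (m : ℕ)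
    · rw [if_pos hi', if_pos hi']
      simp only [ContinuousLinearMap.neg_apply, ContinuousLinearMap.proj_apply]
      simp only [Pi.single_apply, Fin.ext_iff]
      split_ifs <;> first | (exfalso; omega) | ring
    · rw [if_neg hi', if_neg hi']
      simp only [ContinuousLinearMap.proj_apply, Pi.single_apply, Fin.ext_iff]
      split_ifs <;> first | (exfalso; omega) | ring

lemma Tmat_det (n : ℕ) (m : Fin n) (x : Fin n → ℝ) :
    (Tmat n m x).det = -(Rmat (m : ℕ) (x m)).det := by
  have hm := m.isLt
  -- outer split : Fin (m+1) ⊕ Fin (n-m-1) ≃ Fin n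
  set e2 : Fin ((m : ℕ) + 1) ⊕ Fin (n - (m : ℕ) - 1) ≃ Fin n :=
    finSumFinEquiv.trans (finCongr (by omega)) with he2
  have hA : (Tmat n m x).submatrix e2 e2 =
      Matrix.fromBlocks
        ((Tmat n m x).submatrix
          (fun i : Fin ((m : ℕ) + 1) => (⟨(i : ℕ), by omega⟩ : Fin n))
          (fun i : Fin ((m : ℕ) + 1) => (⟨(i : ℕ), by omega⟩ : Fin n)))
        ((Tmat n m x).submatrix
          (fun i : Fin ((m : ℕ) + 1) => (⟨(i : ℕ), by omega⟩ : Fin n))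
          (fun i : Fin (n - (m : ℕ) - 1) => (⟨(m : ℕ) + 1 + (i : ℕ), by omega⟩ : Fin n)))
        0 1 := by
    ext i j
    have key : ∀ p : Fin ((m : ℕ) + 1) ⊕ Fin (n - (m : ℕ) - 1),
        ((e2 p : Fin n) : ℕ) = Sum.elim (fun i : Fin ((m:ℕ)+1) => (i : ℕ))
          (fun i : Fin (n - (m:ℕ) - 1) => (m : ℕ) + 1 + (i : ℕ)) p := by
      rintro (p | p) <;> simp [he2]
    rcases i with i | i <;> rcases j with j | j <;>
      simp only [Matrix.submatrix_apply, Matrix.fromBlocks_apply₁₁, Matrix.fromBlocks_apply₁₂,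
        Matrix.fromBlocks_apply₂₁, Matrix.fromBlocks_apply₂₂, Matrix.zero_apply,
        Matrix.one_apply, Tmat, key, Sum.elim_inl, Sum.elim_inr] <;>
    · have hi := i.isLt
      have hj := j.isLt
      split_ifs <;>
        first
          | rfl
          | (exfalso; omega)
          | norm_num
          | (exfalso; simp_all [Fin.ext_iff]; omega)
          | simp_all [Fin.ext_iff]
  have step1 : (Tmat n m x).det =
      ((Tmat n m x).submatrix
          (fun i : Fin ((m : ℕ) + 1) => (⟨(i : ℕ), by omega⟩ : Fin n))
          (fun i : Fin ((m : ℕ) + 1) => (⟨(i : ℕ), by omega⟩ : Fin n))).det := by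
    rw [← Matrix.det_submatrix_equiv_self e2, hA, Matrix.det_fromBlocks_zero₂₁,
      Matrix.det_one, mul_one]
  rw [step1]
  set A : Matrix (Fin ((m : ℕ) + 1)) (Fin ((m : ℕ) + 1)) ℝ :=
    (Tmat n m x).submatrix
      (fun i : Fin ((m : ℕ) + 1) => (⟨(i : ℕ), by omega⟩ : Fin n))
      (fun i : Fin ((m : ℕ) + 1) => (⟨(i : ℕ), by omega⟩ : Fin n)) with hAdef
  have hA2 : A.submatrix (finSumFinEquiv : Fin (m : ℕ) ⊕ Fin 1 ≃ Fin ((m : ℕ) + 1))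
        (finSumFinEquiv : Fin (m : ℕ) ⊕ Fin 1 ≃ Fin ((m : ℕ) + 1)) =
      Matrix.fromBlocks (Rmat (m : ℕ) (x m))
        (Matrix.of fun (i : Fin (m : ℕ)) (_ : Fin 1) =>
          -(x ⟨(m : ℕ) - 1 - (i : ℕ), by omega⟩))
        0 (Matrix.of fun _ _ : Fin 1 => (-1 : ℝ)) := by
    ext i j
    have key2 : ∀ p : Fin (m : ℕ) ⊕ Fin 1,
        ((finSumFinEquiv p : Fin ((m : ℕ) + 1)) : ℕ) =
          Sum.elim (fun i : Fin (m : ℕ) => (i : ℕ)) (fun _ => (m : ℕ)) p := by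
      rintro (p | p) <;> simp [Fin.ext_iff]
    rcases i with i | i <;> rcases j with j | j <;>
      simp only [Matrix.submatrix_apply, hAdef, Matrix.fromBlocks_apply₁₁,
        Matrix.fromBlocks_apply₁₂, Matrix.fromBlocks_apply₂₁, Matrix.fromBlocks_apply₂₂,
        Matrix.zero_apply, Matrix.of_apply, Tmat, Rmat, key2, Sum.elim_inl, Sum.elim_inr] <;>
    · have hi := Fin.isLt i
      have hj := Fin.isLt j
      split_ifs <;>
        first
          | rfl
          | (exfalso; omega)
          | norm_num
          | (exfalso; simp_all [Fin.ext_iff]; omega)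
          | simp_all [Fin.ext_iff]
  rw [← Matrix.det_submatrix_equiv_self
    (finSumFinEquiv : Fin (m : ℕ) ⊕ Fin 1 ≃ Fin ((m : ℕ) + 1)) A, hA2,
    Matrix.det_fromBlocks_zero₂₁, Matrix.det_fin_one]
  simp



lemma revAt_of_gt {N i : ℕ} (h : N < i) : revAt N i = i := by
  exact revAt_eq_self_of_lt h

lemma szego_coeff_zero (a : ℕ → ℝ) : ∀ m i, m < i → (szegoReal a m).coeff i = 0 := by
  intro m
  induction m with
  | zero => intro i hi; simp [szegoReal, Polynomial.coeff_one]; omega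
    
  | succ m ih =>
    intro i hi
    obtain ⟨i, rfl⟩ : ∃ i', i = i' + 1 := ⟨i - 1, by omega⟩
    rw [szegoReal, Polynomial.coeff_sub, Polynomial.coeff_X_mul, Polynomial.coeff_C_mul,
      Polynomial.coeff_reflect, revAt_of_gt (by omega), ih i (by omega), ih _ (by omega)]
    ring

lemma szego_coeff_top (a : ℕ → ℝ) : ∀ m, (szegoReal a m).coeff m = 1 := by
  intro m
  induction m with
  | zero => simp [szegoReal]
  | succ m ih =>
    rw [szegoReal, Polynomial.coeff_sub, Polynomial.coeff_X_mul, Polynomial.coeff_C_mul,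
      Polynomial.coeff_reflect, revAt_of_gt (by omega), szego_coeff_zero a m (m+1) (by omega),
      ih]
    ring

lemma szego_congr {a b : ℕ → ℝ} : ∀ m, (∀ k, k < m → a k = b k) →
    szegoReal a m = szegoReal b m := by
  intro m
  induction m with
  | zero => intro _; rfl
  | succ m ih =>
    intro h
    rw [szegoReal, szegoReal, ih (fun k hk => h k (by omega)), h m (by omega)]

lemma Tderiv_det (n : ℕ) (m : Fin n) (x : Fin n → ℝ) :
    LinearMap.det ((Tderiv n m x) : (Fin n → ℝ) →ₗ[ℝ] (Fin n → ℝ)) =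
      -(Rmat (m : ℕ) (x m)).det := by
  rw [← LinearMap.det_toMatrix', toMatrix'_Tderiv, Tmat_det]

/-- `a` extended by zero to all of `ℕ`. -/
noncomputable def abar (n : ℕ) (a : Fin n → ℝ) : ℕ → ℝ :=
  fun k => if h : k < n then a ⟨k, h⟩ else 0

/-- The intermediate map: first `m` coordinates are the coefficients of `Φ_m`, the
remaining coordinates are passed through. -/
noncomputable def vmap (n m : ℕ) (a : Fin n → ℝ) : Fin n → ℝ := fun j =>
  if (j : ℕ) < m then (szegoReal (abar n a) m).coeff (m - 1 - (j : ℕ)) else a j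

lemma vmap_zero (n : ℕ) : vmap n 0 = id := by
  funext a j; simp [vmap]

lemma vmap_succ (n m : ℕ) (hm : m < n) :
    vmap n (m + 1) = Tmap n ⟨m, hm⟩ ∘ vmap n m := by
  funext a j
  simp only [Function.comp_apply, vmap, Tmap, Fin.val_mk]
  by_cases hj : (j : ℕ) < m
  · rw [if_pos (by omega : (j : ℕ) < m + 1), if_pos hj, if_pos hj]
    have hmj : (m + 1 - 1 - (j : ℕ)) = (m - 1 - (j : ℕ)) + 1 := by omega
    rw [hmj, szegoReal, Polynomial.coeff_sub, Polynomial.coeff_X_mul, Polynomial.coeff_C_mul,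
      Polynomial.coeff_reflect, revAt_le (by omega), show m - (m - 1 - (j : ℕ) + 1) = (j : ℕ)
        by omega]
    rw [if_pos (by omega : m - 1 - (j : ℕ) < m),
      show m - 1 - (m - 1 - (j : ℕ)) = (j : ℕ) by omega]
    rw [if_neg (lt_irrefl m), show abar n a m = a ⟨m, hm⟩ from dif_pos hm]
  · by_cases hj' : (j : ℕ) = m
    · rw [if_pos (by omega : (j : ℕ) < m + 1), if_neg hj, if_pos hj']
      rw [show m + 1 - 1 - (j : ℕ) = 0 by omega, szegoReal, Polynomial.coeff_sub,
        Polynomial.mul_coeff_zero, Polynomial.coeff_X_zero, Polynomial.coeff_C_mul,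
        Polynomial.coeff_reflect, revAt_le (by omega), Nat.sub_zero, szego_coeff_top]
      rw [if_neg (lt_irrefl m)]
      have : abar n a m = a ⟨m, hm⟩ := dif_pos hm
      rw [this]
      ring
    · rw [if_neg (show ¬ (j : ℕ) < m + 1 by omega), if_neg hj, if_neg hj']
      rw [if_neg hj]

lemma verblunsky_eq_vmap (n : ℕ) : verblunskyToCoeffsReal n = vmap n n := by
  funext a j
  have := j.isLt
  have habar : (fun k => if h : k < n then a ⟨k, h⟩ else 0) = abar n a := rfl
  simp only [verblunskyToCoeffsReal, vmap, if_pos this, habar]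

lemma vmap_hasFDerivAt (n : ℕ) (a : Fin n → ℝ) :
    ∀ m, m ≤ n → ∃ L : (Fin n → ℝ) →L[ℝ] (Fin n → ℝ),
      HasFDerivAt (vmap n m) L a ∧
      LinearMap.det (L : (Fin n → ℝ) →ₗ[ℝ] (Fin n → ℝ)) =
        ∏ k ∈ Finset.range m, -(Rmat k (abar n a k)).det := by
  intro m
  induction m with
  | zero =>
    intro _
    refine ⟨ContinuousLinearMap.id ℝ _, ?_, by simp⟩
    rw [vmap_zero]
    exact hasFDerivAt_id a
  | succ m ih =>
    intro hm1
    obtain ⟨L, hL, hdet⟩ := ih (by omega)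
    have hm : m < n := hm1
    refine ⟨(Tderiv n ⟨m, hm⟩ (vmap n m a)).comp L, ?_, ?_⟩
    · rw [vmap_succ n m hm]
      exact (hasFDerivAt_Tmap n ⟨m, hm⟩ (vmap n m a)).comp a hL
    · rw [ContinuousLinearMap.toLinearMap_comp, LinearMap.det_comp, hdet, Tderiv_det,
        Finset.prod_range_succ]
      have h1 : vmap n m a ⟨m, hm⟩ = a ⟨m, hm⟩ := by simp [vmap]
      have h2 : abar n a m = a ⟨m, hm⟩ := dif_pos hm
      rw [h1, h2]
      ring

/-- for real Verblunsky coefficients `α_k ∈ (-1,1)`, the Jacobian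
determinant of the `ℝ^n → ℝ^n` map `(α_0,…,α_{n-1}) ↦ (κ_1^{(n)},…,κ_n^{(n)})`
equals `(-1)^n ∏_{k even} (1-α_k²)^{k/2} ∏_{k odd} (1-α_k)(1-α_k²)^{(k-1)/2}`. -/
theorem jacobian_verblunsky_to_coeffs_real (n : ℕ) (hn : 0 < n) (a : Fin n → ℝ)
    (ha : ∀ k, a k ∈ Set.Ioo (-1 : ℝ) 1) :
    LinearMap.det
        ((fderiv ℝ (verblunskyToCoeffsReal n) a : (Fin n → ℝ) →L[ℝ] (Fin n → ℝ)) :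
          (Fin n → ℝ) →ₗ[ℝ] (Fin n → ℝ)) =
      (-1 : ℝ) ^ n *
        ∏ k : Fin n,
          (if Even (k : ℕ) then (1 - a k ^ 2) ^ ((k : ℕ) / 2)
            else (1 - a k) * (1 - a k ^ 2) ^ (((k : ℕ) - 1) / 2)) := by
  obtain ⟨L, hL, hdet⟩ := vmap_hasFDerivAt n a n le_rfl
  rw [verblunsky_eq_vmap, hL.fderiv, hdet]
  have h1 : ∀ k ∈ Finset.range n, -(Rmat k (abar n a k)).det =
      (-1 : ℝ) * (Rmat k (abar n a k)).det := fun k _ => by ring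
  rw [Finset.prod_congr rfl h1, Finset.prod_mul_distrib, Finset.prod_const,
    Finset.card_range]
  congr 1
  rw [← Fin.prod_univ_eq_prod_range (fun k => (Rmat k (abar n a k)).det) n]
  refine Finset.prod_congr rfl fun k _ => ?_
  have h2 : abar n a (k : ℕ) = a k := by
    rw [abar, dif_pos k.isLt]
  rw [h2, Rmat_det]
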